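/- arXiv:1804.04504 — 2 statements merged into one kernel-verified Lean document; each statement's English description precedes it below -/
import Mathlib

section
/- For even n = 2k with n ≥ 6, the schedule generated by the circle design has rest difference index exactly 2. -/
/-- `f` lists the games of a single round-robin tournament on `n` teams:
positions `0, ..., N-1` are in bijection with the unordered pairs of distinct teams. -/
def isSchedule (n N : ℕ) (f : ℕ → Sym2 (Fin n)) : Prop :=
  (∀ i, i < N → ¬ (f i).IsDiag) ∧
  ∀ p : Sym2 (Fin n), ¬ p.IsDiag → ∃! i, i < N ∧ f i = p

/-- The schedule has guaranteed rest time at least `b`: any two games involving a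
common team `t` are separated by at least `b` games not involving `t`. -/
def hasRest (n N : ℕ) (f : ℕ → Sym2 (Fin n)) (b : ℕ) : Prop :=
  ∀ t : Fin n, ∀ i j, i < j → j < N → t ∈ f i → t ∈ f j →
    b ≤ ((Finset.Ioo i j).filter (fun l => t ∉ f l)).card

/-- Number of games played by team `t` in the first `m` games. -/
def played (n : ℕ) (f : ℕ → Sym2 (Fin n)) (t : Fin n) (m : ℕ) : ℕ :=
  ((Finset.range m).filter (fun i => t ∈ f i)).card

/-- The games-played difference index is at most `p`. -/
def gpLe (n N : ℕ) (f : ℕ → Sym2 (Fin n)) (p : ℕ) : Prop :=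
  ∀ m, m ≤ N → ∀ t1 t2 : Fin n, played n f t1 m ≤ played n f t2 m + p

/-- The rest of team `t` going into the game at position `i`: the number of games since
`t`'s previous game, where all teams play an imaginary game one slot before game `0`. -/
def rest (n : ℕ) (f : ℕ → Sym2 (Fin n)) (t : Fin n) (i : ℕ) : ℕ :=
  ((Finset.range i).filter (fun j => ∀ l, j ≤ l → l < i → t ∉ f l)).card

/-- The rest difference index is at most `d`. -/
def rdLe (n N : ℕ) (f : ℕ → Sym2 (Fin n)) (d : ℕ) : Prop :=
  ∀ i, i < N → ∀ t1 t2 : Fin n, t1 ∈ f i → t2 ∈ f i →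
    rest n f t1 i ≤ rest n f t2 i + d

/-- Circle design for `n = 2k` teams (0-indexed teams; team `t` is team `t+1` of the
paper): team `0` is fixed at the top-left; the other `2k-1` teams occupy cyclic
positions `0, ..., 2k-2` (top-row columns `1..k-1` left to right, then bottom-row
columns `k-1` down to `0`), each rotating one step per round.
`circleTeamE k hk r c` is the team at cyclic position `c` in round `r`. -/
def circleTeamE (k : ℕ) (hk : 0 < k) (r c : ℕ) : Fin (2*k) :=
  ⟨(c + (2*k-1) - r % (2*k-1)) % (2*k-1) + 1, by
    have h := Nat.mod_lt (c + (2*k-1) - r % (2*k-1)) (y := 2*k-1) (by omega)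
    omega⟩

/-- The `i`-th game (0-indexed) of the asynchronous circle-design schedule for `2k`
teams: round `i / k`, column `i % k`, columns read left to right. -/
def circleGameE (k : ℕ) (hk : 0 < k) (i : ℕ) : Sym2 (Fin (2*k)) :=
  if i % k = 0 then Sym2.mk ⟨0, by omega⟩ (circleTeamE k hk (i / k) (2*k-2))
  else Sym2.mk (circleTeamE k hk (i / k) (i % k - 1)) (circleTeamE k hk (i / k) (2*k-2 - i % k))

/-!
Every team plays exactly once in each round of `k` consecutive games. A team at cyclic
position `p` plays in column `p + 1` (top row) or `2k - 2 - p` (bottom row); one step along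
the cycle moves it by at most one column, including the wrap-around from column `0` to
column `1`. So if a team plays in column `c` of round `r + 1` after column `c'` of round `r`,
its rest is `k + c - c' - 1` with `c' ∈ {c - 1, c, c + 1}`, and the rests of two opponents
differ by at most `2`; in round `0` both rests equal the game's index. The bound is attained
in game `k + 1` (round `1`, column `1`), whose teams `2k - 1` and `2k - 3` played in columns
`0` and `2` of round `0`.
-/

section Rest

variable {n : ℕ} {f : ℕ → Sym2 (Fin n)} {t : Fin n}

theorem rest_eq_of_mem_of_forall_not_mem {p i : ℕ} (hpi : p < i) (hp : t ∈ f p)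
    (hmid : ∀ l, p < l → l < i → t ∉ f l) : rest n f t i = i - p - 1 := by
  have hset : (Finset.range i).filter (fun j => ∀ l, j ≤ l → l < i → t ∉ f l)
      = Finset.Ioo p i := by
    ext j
    simp only [Finset.mem_filter, Finset.mem_range, Finset.mem_Ioo]
    constructor
    · rintro ⟨hj, hall⟩
      exact ⟨lt_of_not_ge fun hjp => hall p hjp hpi hp, hj⟩
    · rintro ⟨hpj, hji⟩
      exact ⟨hji, fun l hjl hli => hmid l (hpj.trans_le hjl) hli⟩
  rw [rest, hset, Nat.card_Ioo]

theorem rest_eq_self {i : ℕ} (h : ∀ l < i, t ∉ f l) : rest n f t i = i := by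
  rw [rest, Finset.filter_true_of_mem fun _ _ l _ hli => h l hli, Finset.card_range]

end Rest

section Rounds

def PlaysInColumns (n k : ℕ) (f : ℕ → Sym2 (Fin n)) (col : Fin n → ℕ → ℕ) : Prop :=
  ∀ t r c, c < k → (t ∈ f (k * r + c) ↔ c = col t r)

variable {n k : ℕ} {f : ℕ → Sym2 (Fin n)} {col : Fin n → ℕ → ℕ}

theorem rest_eq_self_of_first_round (hf : PlaysInColumns n k f col)
    {t : Fin n} {c : ℕ} (hc : c < k) (ht : t ∈ f c) : rest n f t c = c := by
  have hct : c = col t 0 := (hf t 0 c hc).1 (by simpa using ht)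
  refine rest_eq_self fun l hlc hl => ?_
  have hlt : l = col t 0 := (hf t 0 l (hlc.trans hc)).1 (by simpa using hl)
  omega

theorem rest_add_col_of_mem (hf : PlaysInColumns n k f col)
    (hcol : ∀ t r, col t r < k) {t : Fin n} {r c : ℕ} (hc : c < k)
    (ht : t ∈ f (k * (r + 1) + c)) : rest n f t (k * (r + 1) + c) + col t r + 1 = k + c := by
  have hct : c = col t (r + 1) := (hf t (r + 1) c hc).1 ht
  have hkr : k * (r + 1) = k * r + k := by ring
  have hlt := hcol t r
  have hlast : t ∈ f (k * r + col t r) := (hf t r _ hlt).2 rfl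
  have hmid : ∀ l, k * r + col t r < l → l < k * (r + 1) + c → t ∉ f l := by
    intro l hl hli hmem
    rcases lt_or_ge l (k * (r + 1)) with hlr | hlr
    · have := (hf t r (l - k * r) (by omega)).1 (by rwa [Nat.add_sub_cancel' (by omega)])
      omega
    · have := (hf t (r + 1) (l - k * (r + 1)) (by omega)).1
        (by rwa [Nat.add_sub_cancel' hlr])
      omega
  rw [rest_eq_of_mem_of_forall_not_mem (by omega) hlast hmid]
  omega

theorem rdLe_of_col_step (hf : PlaysInColumns n k f col)
    (hcol : ∀ t r, col t r < k) {s : ℕ}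
    (hstep : ∀ t r, col t (r + 1) ≤ col t r + s ∧ col t r ≤ col t (r + 1) + s) {N : ℕ} :
    rdLe n N f (2 * s) := by
  intro i _ t₁ t₂ h₁ h₂
  have hk : 0 < k := (Nat.zero_le _).trans_lt (hcol t₁ 0)
  have hi := Nat.div_add_mod i k
  have hc : i % k < k := Nat.mod_lt i hk
  rw [← hi] at h₁ h₂ ⊢
  generalize i / k = r at h₁ h₂ ⊢
  cases r with
  | zero =>
    rw [Nat.mul_zero, Nat.zero_add] at h₁ h₂ ⊢
    rw [rest_eq_self_of_first_round hf hc h₁, rest_eq_self_of_first_round hf hc h₂]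
    omega
  | succ r =>
    have e₁ := rest_add_col_of_mem hf hcol hc h₁
    have e₂ := rest_add_col_of_mem hf hcol hc h₂
    have c₁ := (hf _ _ _ hc).1 h₁
    have c₂ := (hf _ _ _ hc).1 h₂
    have s₁ := hstep t₁ r
    have s₂ := hstep t₂ r
    omega

theorem not_rdLe_one_of_col_gap (hf : PlaysInColumns n k f col)
    (hcol : ∀ t r, col t r < k) {t₁ t₂ : Fin n} {r c N : ℕ} (hc : c < k)
    (h₁ : t₁ ∈ f (k * (r + 1) + c)) (h₂ : t₂ ∈ f (k * (r + 1) + c)) (hN : k * (r + 1) + c < N)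
    (hgap : col t₂ r + 2 ≤ col t₁ r) : ¬ rdLe n N f 1 := fun hrd => by
  have e₁ := rest_add_col_of_mem hf hcol hc h₁
  have e₂ := rest_add_col_of_mem hf hcol hc h₂
  have := hrd _ hN t₂ t₁ h₂ h₁
  omega

end Rounds

section Circle

def circlePosCol (k p : ℕ) : ℕ := if p + 1 < k then p + 1 else 2 * k - 2 - p

/-- Team `t ≠ 0` is at cyclic position `(t - 1 + r) % (2k - 1)` in round `r`. -/
def circleCol (k : ℕ) (t : Fin (2 * k)) (r : ℕ) : ℕ :=
  if t.val = 0 then 0 else circlePosCol k ((t.val - 1 + r) % (2 * k - 1))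

variable {k : ℕ}

theorem circlePosCol_lt (hk : 0 < k) (p : ℕ) : circlePosCol k p < k := by
  unfold circlePosCol; split_ifs <;> omega

theorem circleCol_lt (hk : 0 < k) (t : Fin (2 * k)) (r : ℕ) : circleCol k t r < k := by
  unfold circleCol; split_ifs
  · exact hk
  · exact circlePosCol_lt hk _

theorem circleCol_of_ne_zero {t : Fin (2 * k)} (ht : t.val ≠ 0) (r : ℕ) :
    circleCol k t r = circlePosCol k ((t.val - 1 + r) % (2 * k - 1)) :=
  if_neg ht

theorem circleCol_of_val_eq {t : Fin (2 * k)} {v : ℕ} (ht : t.val = v + 1) (r : ℕ) :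
    circleCol k t r = circlePosCol k ((v + r) % (2 * k - 1)) := by
  rw [circleCol_of_ne_zero (by omega), ht, Nat.add_sub_cancel]

theorem circlePosCol_succ_mod {p : ℕ} (hp : p < 2 * k - 1) :
    circlePosCol k ((p + 1) % (2 * k - 1)) ≤ circlePosCol k p + 1 ∧
      circlePosCol k p ≤ circlePosCol k ((p + 1) % (2 * k - 1)) + 1 := by
  rcases Nat.lt_or_ge (p + 1) (2 * k - 1) with hp' | hp'
  · rw [Nat.mod_eq_of_lt hp']
    unfold circlePosCol; split_ifs <;> omega
  · rw [show p + 1 = 2 * k - 1 by omega, Nat.mod_self]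
    unfold circlePosCol; split_ifs <;> omega

theorem circleCol_succ (t : Fin (2 * k)) (r : ℕ) :
    circleCol k t (r + 1) ≤ circleCol k t r + 1 ∧ circleCol k t r ≤ circleCol k t (r + 1) + 1 := by
  by_cases ht : t.val = 0
  · simp only [circleCol, if_pos ht]; omega
  rw [circleCol_of_ne_zero ht, circleCol_of_ne_zero ht, ← Nat.add_assoc, ← Nat.mod_add_mod]
  exact circlePosCol_succ_mod (Nat.mod_lt _ (by omega))

theorem add_sub_mod_eq_iff {m c v : ℕ} (r : ℕ) (hc : c < m) (hv : v < m) :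
    (c + m - r % m) % m = v ↔ (v + r) % m = c := by
  have hrm : r % m ≤ c + m := (Nat.mod_lt _ (by omega)).le.trans (by omega)
  conv_lhs => rw [← Nat.mod_eq_of_lt hv]
  conv_rhs => rw [← Nat.mod_eq_of_lt hc]
  rw [← ZMod.natCast_eq_natCast_iff', ← ZMod.natCast_eq_natCast_iff']
  push_cast [Nat.cast_sub hrm, ZMod.natCast_self, ZMod.natCast_mod]
  constructor <;> intro h <;> linear_combination -h

theorem eq_circleTeamE_iff (hk : 0 < k) {t : Fin (2 * k)} (ht : t.val ≠ 0) (r : ℕ) {c : ℕ}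
    (hc : c < 2 * k - 1) :
    t = circleTeamE k hk r c ↔ (t.val - 1 + r) % (2 * k - 1) = c := by
  rw [Fin.ext_iff, ← add_sub_mod_eq_iff r hc (show t.val - 1 < 2 * k - 1 by omega)]
  simp only [circleTeamE]
  omega

theorem playsInColumns_circleGameE (hk : 0 < k) :
    PlaysInColumns (2 * k) k (circleGameE k hk) (circleCol k) := by
  intro t r c hc
  have hmod : (k * r + c) % k = c := by rw [Nat.mul_add_mod, Nat.mod_eq_of_lt hc]
  have hdiv : (k * r + c) / k = r := by
    rw [Nat.mul_add_div hk, Nat.div_eq_of_lt hc, Nat.add_zero]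
  simp only [circleGameE, hmod, hdiv]
  by_cases ht : t.val = 0
  · have hteam : ∀ c', t ≠ circleTeamE k hk r c' := fun c' h => by
      simp only [Fin.ext_iff, circleTeamE] at h
      omega
    simp only [circleCol, if_pos ht]
    split_ifs with hc0 <;> simp [Sym2.mem_iff, hteam, Fin.ext_iff, ht, hc0]
  · have hp : (t.val - 1 + r) % (2 * k - 1) < 2 * k - 1 := Nat.mod_lt _ (by omega)
    have ht0 : t ≠ ⟨0, by omega⟩ := fun h => ht (congrArg Fin.val h)
    rw [circleCol_of_ne_zero ht]
    split_ifs with hc0 <;>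
      simp only [Sym2.mem_iff, ht0, false_or,
        eq_circleTeamE_iff hk ht r (show 2 * k - 2 < 2 * k - 1 by omega),
        eq_circleTeamE_iff hk ht r (show 2 * k - 2 - c < 2 * k - 1 by omega),
        eq_circleTeamE_iff hk ht r (show c - 1 < 2 * k - 1 by omega)] <;>
      unfold circlePosCol <;> split_ifs <;> omega

end Circle

/-- For even `n = 2k ≥ 6`, the circle-design schedule has rest difference index
exactly `2`. -/
theorem stmt11 (k : ℕ) (hk : 3 ≤ k) :
    rdLe (2*k) (2*k*(2*k-1)/2) (circleGameE k (by omega)) 2 ∧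
    ¬ rdLe (2*k) (2*k*(2*k-1)/2) (circleGameE k (by omega)) 1 := by
  have hk0 : 0 < k := by omega
  have hf := playsInColumns_circleGameE hk0
  refine ⟨rdLe_of_col_step hf (circleCol_lt hk0) circleCol_succ, ?_⟩
  let t₁ : Fin (2 * k) := ⟨2 * k - 1, by omega⟩
  let t₂ : Fin (2 * k) := ⟨2 * k - 3, by omega⟩
  have col₁ := circleCol_of_val_eq (t := t₁) (show 2 * k - 1 = 2 * k - 2 + 1 by omega)
  have col₂ := circleCol_of_val_eq (t := t₂) (show 2 * k - 3 = 2 * k - 4 + 1 by omega)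
  have h₁ : t₁ ∈ circleGameE k hk0 (k * (0 + 1) + 1) := by
    rw [hf _ _ _ (by omega), col₁, show 2 * k - 2 + (0 + 1) = 2 * k - 1 by omega, Nat.mod_self,
      circlePosCol, if_pos (by omega)]
  have h₂ : t₂ ∈ circleGameE k hk0 (k * (0 + 1) + 1) := by
    rw [hf _ _ _ (by omega), col₂, Nat.mod_eq_of_lt (by omega), circlePosCol, if_neg (by omega)]
    omega
  have hgap : circleCol k t₁ 0 + 2 ≤ circleCol k t₂ 0 := by
    rw [col₁, col₂, Nat.mod_eq_of_lt (by omega), Nat.mod_eq_of_lt (by omega), circlePosCol,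
      circlePosCol, if_neg (by omega), if_neg (by omega)]
    omega
  have hN : k * (0 + 1) + 1 < 2 * k * (2 * k - 1) / 2 := by
    rw [Nat.mul_assoc, Nat.mul_div_cancel_left _ two_pos]
    have := Nat.mul_le_mul_left k (show 5 ≤ 2 * k - 1 by omega)
    omega
  exact not_rdLe_one_of_col_gap hf (circleCol_lt hk0) (by omega) h₂ h₁ hN hgap
end

section
/- For odd n = 2k+1 with n ≥ 5, the schedule generated by the circle design has rest difference index exactly k+1. -/
/-- Circle design for odd `n = 2k+1` teams `0, ..., 2k` (team `t` is team `t+1` of the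
paper): a dummy team is fixed at the top-left; the `2k+1` real teams occupy cyclic
positions `0, ..., 2k` (top-row columns `1..k` left to right, then bottom-row columns
`k` down to `0`), each rotating one step per round; the team at cyclic position `2k`
(below the dummy) sits out the round. -/
def circleTeamO (k : ℕ) (r c : ℕ) : Fin (2*k+1) :=
  ⟨(c + (2*k+1) - r % (2*k+1)) % (2*k+1), Nat.mod_lt _ (by omega)⟩

/-- The `i`-th game (0-indexed) of the asynchronous circle-design schedule for `2k+1`
teams: round `i / k`, column `i % k + 1`, columns read left to right. -/
def circleGameO (k : ℕ) (i : ℕ) : Sym2 (Fin (2*k+1)) :=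
  Sym2.mk (circleTeamO k (i / k) (i % k)) (circleTeamO k (i / k) (2*k - 1 - i % k))

/-!
In round `r` team `t` sits at cyclic position `(t + r) mod (2k+1)`, and positions `p` and
`2k-1-p` share a column, so a team plays at most once per round and, moving one position per
round, its column drops by at most one from one round to the next. Hence consecutive games of a
team are at least `k-1` apart, and at most `2k` apart (a team sits out only between two games in
the first column). So from the second round on every rest lies between `k-2` and `2k-1`, while
in the first round both teams of game `i` have rest `i`; this gives the bound `k+1`. It is
attained at game `2k`, where the team that sat out round `1` (rest `2k-1`) meets the team that
played game `k+1` (rest `k-2`).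
-/
section Rest

variable {n : ℕ} {f : ℕ → Sym2 (Fin n)} {t : Fin n} {a i : ℕ}

theorem rest_le_self : rest n f t i ≤ i :=
  (Finset.card_filter_le _ _).trans (Finset.card_range i).le

theorem rest_le_of_mem (ha : t ∈ f a) (hai : a < i) : rest n f t i ≤ i - (a + 1) := by
  rw [← Nat.card_Ico]
  refine Finset.card_le_card fun j hj => ?_
  rw [Finset.mem_filter, Finset.mem_range] at hj
  rw [Finset.mem_Ico]
  refine ⟨?_, hj.1⟩
  by_contra hja
  exact hj.2 a (by omega) hai ha

theorem sub_le_rest (h : ∀ l, a ≤ l → l < i → t ∉ f l) : i - a ≤ rest n f t i := by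
  rw [← Nat.card_Ico]
  refine Finset.card_le_card fun j hj => ?_
  rw [Finset.mem_Ico] at hj
  exact Finset.mem_filter.2 ⟨Finset.mem_range.2 hj.2, fun l hjl hli => h l (hj.1.trans hjl) hli⟩

end Rest

namespace CircleDesign

def position (k : ℕ) (t : Fin (2*k+1)) (r : ℕ) : ℕ := (t + r) % (2*k+1)

/-- The team at cyclic position `p ≤ 2k-1` plays in column `column k p` (counted from `0`);
the team at position `2k` sits out. -/
def column (k p : ℕ) : ℕ := if p < k then p else 2*k-1-p

variable {k : ℕ}

theorem column_of_lt {p : ℕ} (hp : p < k) : column k p = p := if_pos hp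

theorem column_of_le {p : ℕ} (hp : k ≤ p) : column k p = 2*k-1-p := if_neg (by omega)

theorem column_lt {p : ℕ} (hp : p < 2*k) : column k p < k := by
  unfold column; split_ifs <;> omega

theorem position_lt (t : Fin (2*k+1)) (r : ℕ) : position k t r < 2*k+1 :=
  Nat.mod_lt _ (by omega)

theorem position_of_lt {t : Fin (2*k+1)} {r : ℕ} (h : t + r < 2*k+1) : position k t r = t + r :=
  Nat.mod_eq_of_lt h

theorem position_succ (t : Fin (2*k+1)) (r : ℕ) :
    position k t (r+1) = if position k t r = 2*k then 0 else position k t r + 1 := by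
  have hlt := position_lt t r
  unfold position at *
  rw [← Nat.add_assoc, ← Nat.mod_add_mod]
  split_ifs with h
  · rw [h, Nat.mod_self]
  · exact Nat.mod_eq_of_lt (by omega)

theorem circleTeamO_eq_iff {r c : ℕ} (hc : c < 2*k+1) (t : Fin (2*k+1)) :
    circleTeamO k r c = t ↔ position k t r = c := by
  have hshift : (c + (2*k+1) - r % (2*k+1) + r) % (2*k+1) = c := by
    have := Nat.div_add_mod r (2*k+1)
    have := Nat.mod_lt r (show 0 < 2*k+1 by omega)
    rw [show c + (2*k+1) - r % (2*k+1) + r = c + (2*k+1) * (r / (2*k+1) + 1) by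
      rw [mul_add]; omega, Nat.add_mul_mod_self_left, Nat.mod_eq_of_lt hc]
  rw [Fin.ext_iff, circleTeamO, position]
  constructor
  · intro h
    rw [← h, Nat.mod_add_mod, hshift]
  · intro h
    have : (t : ℕ) ≡ c + (2*k+1) - r % (2*k+1) [MOD 2*k+1] :=
      Nat.ModEq.add_right_cancel' r (h.trans hshift.symm)
    exact Eq.trans this.symm (Nat.mod_eq_of_lt t.isLt)

theorem mem_circleGameO_iff (hk : 0 < k) {t : Fin (2*k+1)} {i : ℕ} :
    t ∈ circleGameO k i ↔
      position k t (i/k) ≠ 2*k ∧ column k (position k t (i/k)) = i % k := by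
  have hc := Nat.mod_lt i hk
  have hp := position_lt t (i/k)
  rw [circleGameO, Sym2.mem_iff, eq_comm, @eq_comm _ t, circleTeamO_eq_iff (by omega),
    circleTeamO_eq_iff (by omega), column]
  split_ifs <;> omega

theorem mem_circleGameO_mul_add_iff (hk : 0 < k) {t : Fin (2*k+1)} {r c : ℕ} (hc : c < k) :
    t ∈ circleGameO k (k*r + c) ↔ position k t r ≠ 2*k ∧ column k (position k t r) = c := by
  rw [mem_circleGameO_iff hk, Nat.mul_add_div hk, Nat.mul_add_mod, Nat.div_eq_of_lt hc,
    Nat.mod_eq_of_lt hc, add_zero]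

theorem mem_circleGameO_of_ne (hk : 0 < k) {t : Fin (2*k+1)} {r : ℕ}
    (hp : position k t r ≠ 2*k) : t ∈ circleGameO k (k*r + column k (position k t r)) :=
  (mem_circleGameO_mul_add_iff hk (column_lt (by have := position_lt t r; omega))).2 ⟨hp, rfl⟩

theorem eq_of_mem_circleGameO_of_div_eq (hk : 0 < k) {t : Fin (2*k+1)} {l i : ℕ}
    (hl : t ∈ circleGameO k l) (hi : t ∈ circleGameO k i) (hli : l / k = i / k) : l = i := by
  rw [mem_circleGameO_iff hk, hli] at hl
  rw [mem_circleGameO_iff hk] at hi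
  have hdl := Nat.div_add_mod l k
  have := Nat.div_add_mod i k
  rw [hli] at hdl
  omega

theorem add_le_succ_of_mem_circleGameO (hk : 0 < k) {t : Fin (2*k+1)} {l i : ℕ}
    (hl : t ∈ circleGameO k l) (hi : t ∈ circleGameO k i) (hli : l < i) : l + k ≤ i + 1 := by
  have hdl := Nat.div_add_mod l k
  have hdi := Nat.div_add_mod i k
  have := Nat.mod_lt l hk
  obtain hs | hs | hs : l / k = i / k ∨ l / k + 1 = i / k ∨ l / k + 2 ≤ i / k := by
    have := Nat.div_le_div_right (c := k) hli.le; omega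
  · exact absurd (eq_of_mem_circleGameO_of_div_eq hk hl hi hs) hli.ne
  · rw [mem_circleGameO_iff hk] at hl hi
    have hstep := position_succ t (l / k)
    have := position_lt t (l / k)
    rw [hs] at hstep
    have : k * (i / k) = k * (l / k) + k := by rw [← hs, mul_add, mul_one]
    unfold column at hl hi
    split_ifs at hstep hl hi <;> omega
  · have := Nat.mul_le_mul_left k hs
    rw [mul_add] at this
    omega

theorem min_le_rest_circleGameO (hk : 0 < k) {t : Fin (2*k+1)} {i : ℕ}
    (hi : t ∈ circleGameO k i) : min i (k-2) ≤ rest (2*k+1) (circleGameO k) t i := by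
  have := sub_le_rest (f := circleGameO k) (a := i + 2 - k) fun l hl hli hlt =>
    absurd (add_le_succ_of_mem_circleGameO hk hlt hi hli) (by omega)
  omega

theorem rest_circleGameO_le (hk : 0 < k) {t : Fin (2*k+1)} {i : ℕ}
    (hi : t ∈ circleGameO k i) : rest (2*k+1) (circleGameO k) t i ≤ 2*k-1 := by
  obtain hi2 | hi2 := lt_or_ge i (2*k)
  · exact rest_le_self.trans (by omega)
  obtain ⟨r, hr⟩ : ∃ r, i / k = r + 2 :=
    ⟨i / k - 2, by have := (Nat.le_div_iff_mul_le hk).2 (show 2 * k ≤ i by omega); omega⟩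
  have hdi := Nat.div_add_mod i k
  have := Nat.mod_lt i hk
  rw [hr, mul_add] at hdi
  by_cases hsit : position k t (r+1) = 2*k
  · -- `t` sat out round `r+1`, so it plays in column `0` of rounds `r` and `r+2`
    have hprev : position k t r = 2*k-1 := by
      have hstep := position_succ t r
      have := position_lt t r
      rw [hsit] at hstep
      split_ifs at hstep <;> omega
    have hcur : position k t (r+2) = 0 := by rw [position_succ, if_pos hsit]
    rw [mem_circleGameO_iff hk, hr, hcur, column_of_lt hk] at hi
    have hprev_mem := mem_circleGameO_of_ne hk (show position k t r ≠ 2*k by omega)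
    rw [hprev, column_of_le (by omega)] at hprev_mem
    have := rest_le_of_mem (i := i) hprev_mem (by omega)
    omega
  · have hcol := column_lt (k := k) (show position k t (r+1) < 2*k by
      have := position_lt t (r+1); omega)
    have := rest_le_of_mem (i := i) (mem_circleGameO_of_ne hk hsit) (by rw [mul_add]; omega)
    rw [mul_add] at this
    omega

theorem rdLe_circleGameO (hk : 0 < k) (N : ℕ) : rdLe (2*k+1) N (circleGameO k) (k+1) := by
  intro i _ t₁ t₂ h₁ h₂
  have := rest_le_self (f := circleGameO k) (t := t₁) (i := i)
  have := rest_circleGameO_le hk h₁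
  have := min_le_rest_circleGameO hk h₂
  omega

theorem not_rdLe_circleGameO (hk : 2 ≤ k) {N : ℕ} (hN : 2*k < N) :
    ¬ rdLe (2*k+1) N (circleGameO k) k := by
  intro h
  have hk0 : 0 < k := by omega
  set t₁ : Fin (2*k+1) := ⟨2*k-1, by omega⟩
  set t₂ : Fin (2*k+1) := ⟨2*k-3, by omega⟩
  have v₁ : (t₁ : ℕ) = 2*k-1 := rfl
  have v₂ : (t₂ : ℕ) = 2*k-3 := rfl
  have h₁0 : position k t₁ 0 = 2*k-1 := by rw [position_of_lt (by omega)]; omega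
  have h₁1 : position k t₁ 1 = 2*k := by rw [position_of_lt (by omega)]; omega
  have h₁2 : position k t₁ 2 = 0 := by rw [position_succ, if_pos h₁1]
  have h₂1 : position k t₂ 1 = 2*k-2 := by rw [position_of_lt (by omega)]; omega
  have h₂2 : position k t₂ 2 = 2*k-1 := by rw [position_of_lt (by omega)]; omega
  have ht₁0 : t₁ ∈ circleGameO k (k*0 + 0) := (mem_circleGameO_mul_add_iff hk0 hk0).2
    ⟨by omega, by rw [h₁0, column_of_le (by omega)]; omega⟩
  have ht₁2 : t₁ ∈ circleGameO k (k*2 + 0) := (mem_circleGameO_mul_add_iff hk0 hk0).2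
    ⟨by omega, by rw [h₁2, column_of_lt hk0]⟩
  have ht₂1 : t₂ ∈ circleGameO k (k*1 + 1) := (mem_circleGameO_mul_add_iff hk0 (by omega)).2
    ⟨by omega, by rw [h₂1, column_of_le (by omega)]; omega⟩
  have ht₂2 : t₂ ∈ circleGameO k (k*2 + 0) := (mem_circleGameO_mul_add_iff hk0 hk0).2
    ⟨by omega, by rw [h₂2, column_of_le (by omega)]; omega⟩
  have hrest₁ : k*2 + 0 - 1 ≤ rest (2*k+1) (circleGameO k) t₁ (k*2 + 0) := by
    refine sub_le_rest fun l hl hli hlt => ?_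
    obtain hlk | hlk := lt_or_ge l k
    · have := eq_of_mem_circleGameO_of_div_eq hk0 hlt ht₁0 (by
        rw [Nat.div_eq_of_lt hlk, Nat.mul_add_div hk0]; simp)
      omega
    · have hl1 : l / k = 1 := by
        rw [Nat.div_eq_iff hk0]; constructor <;> omega
      rw [mem_circleGameO_iff hk0, hl1, h₁1] at hlt
      exact hlt.1 rfl
  have hrest₂ := rest_le_of_mem (i := k*2 + 0) ht₂1 (by omega)
  have := h (k*2 + 0) (by omega) t₁ t₂ ht₁2 ht₂2
  omega

end CircleDesign

open CircleDesign in
/-- For odd `n = 2k+1 ≥ 5`, the circle-design schedule has rest difference index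
exactly `k+1`. -/
theorem stmt14 (k : ℕ) (hk : 2 ≤ k) :
    rdLe (2*k+1) ((2*k+1)*(2*k)/2) (circleGameO k) (k+1) ∧
    ¬ rdLe (2*k+1) ((2*k+1)*(2*k)/2) (circleGameO k) k := by
  have hN : (2*k+1)*(2*k)/2 = (2*k+1)*k := by
    rw [show (2*k+1)*(2*k) = 2*((2*k+1)*k) by ring, Nat.mul_div_cancel_left _ two_pos]
  refine ⟨rdLe_circleGameO (by omega) _, not_rdLe_circleGameO hk ?_⟩
  rw [hN]
  nlinarith
end
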